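/- arXiv:1711.10776 — 2 statements merged into one kernel-verified Lean document; each statement's English description precedes it below -/
import Mathlib

section
/- For all constants a ≥ 0, b ≥ 0, c ≥ 0, the function h(t) = t·(e^{a/t} − 1)·(e^{b/t} − 1)·e^{c/t} is convex on (0, ∞). -/
/-!
`h` is the perspective `t ↦ t f(1/t)` of `f(x) = (e^{ax} − 1)(e^{bx} − 1)e^{cx}`, and perspectives
of convex functions are convex. On `[0, ∞)` each of the three factors of `f` is nonnegative,
nondecreasing and convex, and this class of functions is closed under products, so `f` is convex.
-/

open Set Real

structure MonotoneConvexNonnegOn {𝕜 : Type*} [Field 𝕜] [LinearOrder 𝕜] (s : Set 𝕜) (f : 𝕜 → 𝕜) :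
    Prop where
  convexOn : ConvexOn 𝕜 s f
  monotoneOn : MonotoneOn f s
  nonneg : ∀ x ∈ s, 0 ≤ f x

namespace MonotoneConvexNonnegOn

variable {𝕜 : Type*} [Field 𝕜] [LinearOrder 𝕜] [IsStrictOrderedRing 𝕜] {s : Set 𝕜} {f g : 𝕜 → 𝕜}

theorem mul (hf : MonotoneConvexNonnegOn s f) (hg : MonotoneConvexNonnegOn s g) :
    MonotoneConvexNonnegOn s (f * g) where
  convexOn := hf.convexOn.mul hg.convexOn (fun x hx ↦ hf.nonneg x hx) (fun x hx ↦ hg.nonneg x hx)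
    (hf.monotoneOn.monovaryOn hg.monotoneOn)
  monotoneOn := hf.monotoneOn.mul hg.monotoneOn hf.nonneg hg.nonneg
  nonneg x hx := mul_nonneg (hf.nonneg x hx) (hg.nonneg x hx)

end MonotoneConvexNonnegOn

theorem convexOn_exp_mul (a : ℝ) : ConvexOn ℝ univ fun x ↦ exp (a * x) :=
  convexOn_exp.comp_linearMap (LinearMap.mul ℝ ℝ a)

theorem monotoneOn_exp_mul {a : ℝ} (ha : 0 ≤ a) : MonotoneOn (fun x ↦ exp (a * x)) (Ici 0) :=
  fun _ _ _ _ hxy ↦ exp_le_exp.2 (mul_le_mul_of_nonneg_left hxy ha)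

theorem monotoneConvexNonnegOn_exp_mul {a : ℝ} (ha : 0 ≤ a) :
    MonotoneConvexNonnegOn (Ici 0) fun x ↦ exp (a * x) where
  convexOn := (convexOn_exp_mul a).subset (subset_univ _) (convex_Ici 0)
  monotoneOn := monotoneOn_exp_mul ha
  nonneg _ _ := (exp_pos _).le

theorem monotoneConvexNonnegOn_exp_mul_sub_one {a : ℝ} (ha : 0 ≤ a) :
    MonotoneConvexNonnegOn (Ici 0) fun x ↦ exp (a * x) - 1 where
  convexOn := ((convexOn_exp_mul a).subset (subset_univ _) (convex_Ici 0)).sub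
    (concaveOn_const 1 (convex_Ici 0))
  monotoneOn _ hx _ hy hxy := sub_le_sub_right (monotoneOn_exp_mul ha hx hy hxy) 1
  nonneg _ hx := sub_nonneg.2 (one_le_exp (mul_nonneg ha hx))

theorem ConvexOn.perspective {f : ℝ → ℝ} (hf : ConvexOn ℝ (Ioi 0) f) :
    ConvexOn ℝ (Ioi 0) fun t ↦ t * f t⁻¹ := by
  refine ⟨convex_Ioi 0, fun x (hx : 0 < x) y (hy : 0 < y) p q hp hq hpq ↦ ?_⟩
  have hu : 0 < p * x + q * y := by
    simpa only [smul_eq_mul, mem_Ioi] using convex_Ioi (0 : ℝ) hx hy hp hq hpq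
  set u := p * x + q * y
  -- `1/u` is the convex combination of `1/x` and `1/y` with weights `px/u` and `qy/u`.
  have hweights : p * x / u + q * y / u = 1 := by
    field_simp
    rfl
  have hcomb : (p * x / u) • x⁻¹ + (q * y / u) • y⁻¹ = u⁻¹ := by
    simp only [smul_eq_mul]
    field_simp
    linarith
  have hconv := hf.2 (inv_pos.2 hx) (inv_pos.2 hy) (by positivity) (by positivity) hweights
  rw [hcomb, smul_eq_mul, smul_eq_mul] at hconv
  simp only [smul_eq_mul]
  calc u * f u⁻¹ ≤ u * (p * x / u * f x⁻¹ + q * y / u * f y⁻¹) :=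
        mul_le_mul_of_nonneg_left hconv hu.le
    _ = p * (x * f x⁻¹) + q * (y * f y⁻¹) := by field_simp

/-- For all constants `a ≥ 0`, `b ≥ 0`, `c ≥ 0`, the function
`h(t) = t·(e^{a/t} − 1)·(e^{b/t} − 1)·e^{c/t}` is convex on `(0, ∞)`. -/
theorem stmt_2 (a b c : ℝ) (ha : 0 ≤ a) (hb : 0 ≤ b) (hc : 0 ≤ c) :
    ConvexOn ℝ (Set.Ioi (0 : ℝ))
      (fun t : ℝ => t * ((Real.exp (a / t) - 1) * (Real.exp (b / t) - 1) * Real.exp (c / t))) := by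
  have hf := ((monotoneConvexNonnegOn_exp_mul_sub_one ha).mul
    (monotoneConvexNonnegOn_exp_mul_sub_one hb)).mul (monotoneConvexNonnegOn_exp_mul hc)
  simpa only [div_eq_mul_inv, Pi.mul_apply] using
    (hf.convexOn.subset Ioi_subset_Ici_self (convex_Ioi 0)).perspective
end

section
/- The derivative E′(t) of the NOMA per-device energy function tends to −∞ as t → 0 from the right. -/
/-!
With `x = 1/t` the energy is a perspective `E t = t * f (1/t)`, whose derivative is the intercept
`f x - x * f' x` of the tangent to `f` at `x`. Here `f` is, up to positive constants, a sum of terms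
`(e^{αx} - 1)(e^{βx} - 1)e^{γx}` with nonnegative exponents, each of which has nonpositive
intercept because `e^y - 1 ≤ y e^y`, plus the single term `e^{βx} - 1` with `β = a_j > 0`, whose
intercept `e^{βx}(1 - βx) - 1` tends to `-∞`.
-/

open Filter Topology Real

lemma hasDerivAt_mul_comp_inv {f : ℝ → ℝ} {f' t : ℝ} (hf : HasDerivAt f f' t⁻¹) (ht : t ≠ 0) :
    HasDerivAt (fun s => s * f s⁻¹) (f t⁻¹ - t⁻¹ * f') t := by
  refine ((hasDerivAt_id' t).fun_mul (hf.comp t (hasDerivAt_inv ht))).congr_deriv ?_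
  simp only [Function.comp_apply]
  field_simp
  ring

lemma tendsto_deriv_mul_comp_inv_nhdsGT_zero {f f' : ℝ → ℝ}
    (hf : ∀ x > 0, HasDerivAt f (f' x) x)
    (hlim : Tendsto (fun x => f x - x * f' x) atTop atBot) :
    Tendsto (deriv fun t => t * f t⁻¹) (𝓝[>] 0) atBot := by
  refine (hlim.comp tendsto_inv_nhdsGT_zero).congr' ?_
  filter_upwards [self_mem_nhdsWithin] with t (ht : 0 < t)
  exact ((hasDerivAt_mul_comp_inv (hf _ (inv_pos.2 ht)) ht.ne').deriv).symm

lemma exp_sub_one_le_mul_exp (y : ℝ) : exp y - 1 ≤ y * exp y := by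
  have h := mul_le_mul_of_nonneg_left (add_one_le_exp (-y)) (exp_pos y).le
  rw [← exp_add, add_neg_cancel, exp_zero] at h
  linarith

lemma tendsto_exp_sub_one_sub_mul_deriv_atTop {β : ℝ} (hβ : 0 < β) :
    Tendsto (fun x => (exp (β * x) - 1) - x * (β * exp (β * x))) atTop atBot := by
  have hβx : Tendsto (fun x => β * x) atTop atTop := tendsto_id.const_mul_atTop hβ
  have hprod : Tendsto (fun x => exp (β * x) * (1 - β * x)) atTop atBot :=
    (tendsto_exp_atTop.comp hβx).atTop_mul_atBot₀
      (tendsto_atBot_add_const_left _ 1 (tendsto_neg_atTop_atBot.comp hβx))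
  refine (tendsto_atBot_add_const_right _ (-1) hprod).congr fun x => ?_
  ring

/-- The summand of the energy for device `l`, in the variable `x = 1/t`, with `α = a_l`, `β = a_j`,
`γ = b_{jl}`. -/
noncomputable def nomaTerm (α β γ x : ℝ) : ℝ :=
  (exp (α * x) - 1) * (exp (β * x) - 1) * exp (γ * x)

noncomputable def nomaTermDeriv (α β γ x : ℝ) : ℝ :=
  (α * exp (α * x) * (exp (β * x) - 1) + (exp (α * x) - 1) * (β * exp (β * x))) * exp (γ * x)
    + (exp (α * x) - 1) * (exp (β * x) - 1) * (γ * exp (γ * x))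

lemma hasDerivAt_exp_const_mul (c x : ℝ) :
    HasDerivAt (fun y => exp (c * y)) (c * exp (c * x)) x := by
  simpa [mul_comm] using ((hasDerivAt_id x).const_mul c).exp

lemma hasDerivAt_nomaTerm (α β γ x : ℝ) :
    HasDerivAt (nomaTerm α β γ) (nomaTermDeriv α β γ x) x :=
  (((hasDerivAt_exp_const_mul α x).sub_const 1).mul
    ((hasDerivAt_exp_const_mul β x).sub_const 1)).mul (hasDerivAt_exp_const_mul γ x)

lemma nomaTerm_sub_mul_deriv_nonpos {α β γ x : ℝ} (hα : 0 ≤ α) (hβ : 0 ≤ β) (hγ : 0 ≤ γ)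
    (hx : 0 ≤ x) : nomaTerm α β γ x - x * nomaTermDeriv α β γ x ≤ 0 := by
  have hA : 0 ≤ exp (α * x) - 1 := by linarith [one_le_exp (mul_nonneg hα hx)]
  have hB : 0 ≤ exp (β * x) - 1 := by linarith [one_le_exp (mul_nonneg hβ hx)]
  have hBC : 0 ≤ (exp (β * x) - 1) * exp (γ * x) := mul_nonneg hB (exp_pos _).le
  have hfirst : (exp (α * x) - 1) * ((exp (β * x) - 1) * exp (γ * x))
      ≤ α * x * exp (α * x) * ((exp (β * x) - 1) * exp (γ * x)) :=
    mul_le_mul_of_nonneg_right (exp_sub_one_le_mul_exp _) hBC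
  have hsecond : 0 ≤ x * ((exp (α * x) - 1) * (β * exp (β * x)) * exp (γ * x)) := by positivity
  have hthird : 0 ≤ x * ((exp (α * x) - 1) * (exp (β * x) - 1) * (γ * exp (γ * x))) := by
    positivity
  unfold nomaTerm nomaTermDeriv
  nlinarith

lemma tendsto_sum_nomaTerm_sub_mul_deriv_atTop {ι : Type*} (s : Finset ι) {α γ : ι → ℝ} {β : ℝ}
    (hα : ∀ i ∈ s, 0 ≤ α i) (hβ : 0 < β) (hγ : ∀ i ∈ s, 0 ≤ γ i) :
    Tendsto (fun x => (∑ i ∈ s, nomaTerm (α i) β (γ i) x + (exp (β * x) - 1))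
      - x * (∑ i ∈ s, nomaTermDeriv (α i) β (γ i) x + β * exp (β * x))) atTop atBot := by
  refine tendsto_atBot_mono' _ ?_ (tendsto_exp_sub_one_sub_mul_deriv_atTop hβ)
  filter_upwards [eventually_ge_atTop 0] with x hx
  have hsum : ∑ i ∈ s, (nomaTerm (α i) β (γ i) x - x * nomaTermDeriv (α i) β (γ i) x) ≤ 0 :=
    Finset.sum_nonpos fun i hi => nomaTerm_sub_mul_deriv_nonpos (hα i hi) hβ.le (hγ i hi) hx
  rw [Finset.sum_sub_distrib, ← Finset.mul_sum] at hsum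
  linarith

theorem stmt_7_general (j J : ℕ) (hjJ : j ≤ J)
    (D : ℕ → ℝ) (hD : ∀ l, j ≤ l → l ≤ J → 0 < D l)
    (B σ2 h η PC : ℝ) (hB : 0 < B) (hσ2 : 0 < σ2) (hh : 0 < h)
    (hη0 : 0 < η)
    (a : ℕ → ℝ) (ha : ∀ l, a l = Real.log 2 * D l / B)
    (b : ℕ → ℝ) (hb : ∀ l, b l = Real.log 2 * (∑ s ∈ Finset.Ico (j + 1) l, D s) / B)
    (E : ℝ → ℝ)
    (hE : ∀ t : ℝ, E t =
      σ2 * t / (η * h ^ 2) *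
        ((∑ l ∈ Finset.Icc (j + 1) J,
            (Real.exp (a l / t) - 1) * (Real.exp (a j / t) - 1) * Real.exp (b l / t))
          + (Real.exp (a j / t) - 1)) + t * PC) :
    Tendsto (deriv E) (nhdsWithin 0 (Set.Ioi 0)) atBot := by
  have hlog : 0 < Real.log 2 := Real.log_pos one_lt_two
  have haj : 0 < a j := by rw [ha]; have := hD j le_rfl hjJ; positivity
  have hal : ∀ l ∈ Finset.Icc (j + 1) J, 0 ≤ a l := fun l hl => by
    rw [Finset.mem_Icc] at hl
    rw [ha]; have := hD l (by omega) hl.2; positivity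
  have hbl : ∀ l ∈ Finset.Icc (j + 1) J, 0 ≤ b l := fun l hl => by
    rw [Finset.mem_Icc] at hl
    have : 0 ≤ ∑ s ∈ Finset.Ico (j + 1) l, D s := Finset.sum_nonneg fun s hs => by
      rw [Finset.mem_Ico] at hs; exact (hD s (by omega) (by omega)).le
    rw [hb]; positivity
  set c := σ2 / (η * h ^ 2)
  have hc : 0 < c := by positivity
  have hEf : E = fun t => t * (c * (∑ l ∈ Finset.Icc (j + 1) J, nomaTerm (a l) (a j) (b l) t⁻¹
      + (exp (a j * t⁻¹) - 1)) + PC) := by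
    funext t
    simp only [hE, nomaTerm, div_eq_mul_inv, c]
    ring
  rw [hEf]
  refine tendsto_deriv_mul_comp_inv_nhdsGT_zero (f := fun x => c * (∑ l ∈ Finset.Icc (j + 1) J,
      nomaTerm (a l) (a j) (b l) x + (exp (a j * x) - 1)) + PC) (f' := fun x => c * (∑ l ∈ Finset.Icc (j + 1) J,
      nomaTermDeriv (a l) (a j) (b l) x + a j * exp (a j * x))) (fun x _ => ?_) ?_
  · exact (((HasDerivAt.fun_sum fun l _ => hasDerivAt_nomaTerm _ _ _ x).add
      ((hasDerivAt_exp_const_mul _ x).sub_const 1)).const_mul c).add_const PC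
  · refine (tendsto_atBot_add_const_right _ PC ((tendsto_sum_nomaTerm_sub_mul_deriv_atTop _
      hal haj hbl).const_mul_atBot hc)).congr fun x => ?_
    ring

/-- NOMA per-device energy function: statement 7 of the paper. -/
theorem stmt_7 (j J : ℕ) (hjJ : j ≤ J)
    (D : ℕ → ℝ) (hD : ∀ l, j ≤ l → l ≤ J → 0 < D l)
    (B σ2 h η PC : ℝ) (hB : 0 < B) (hσ2 : 0 < σ2) (hh : 0 < h)
    (hη0 : 0 < η) (hη1 : η ≤ 1) (hPC : 0 ≤ PC)
    (a : ℕ → ℝ) (ha : ∀ l, a l = Real.log 2 * D l / B)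
    (b : ℕ → ℝ) (hb : ∀ l, b l = Real.log 2 * (∑ s ∈ Finset.Ico (j + 1) l, D s) / B)
    (E : ℝ → ℝ)
    (hE : ∀ t : ℝ, E t =
      σ2 * t / (η * h ^ 2) *
        ((∑ l ∈ Finset.Icc (j + 1) J,
            (Real.exp (a l / t) - 1) * (Real.exp (a j / t) - 1) * Real.exp (b l / t))
          + (Real.exp (a j / t) - 1)) + t * PC) :
    Tendsto (deriv E) (nhdsWithin 0 (Set.Ioi 0)) atBot :=
  stmt_7_general j J hjJ D hD B σ2 h η PC hB hσ2 hh hη0 a ha b hb E hE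
end
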